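/- arXiv:2601.04530 — 5 statements merged into one kernel-verified Lean document; each statement's English description precedes it below -/
import Mathlib

section
/- Let G be a finite simple graph of order n ≥ 2 in which every singleton {x} is an identity Seidel switch (i.e., x(G) ≅ G for every vertex x). Then every vertex of minimum degree δ(G) is adjacent to every vertex of maximum degree Δ(G), provided δ(G) < Δ(G) or the vertices are distinct. -/
/-- The Seidel switch of a graph `G` with respect to a set `S` of vertices:
a pair of distinct vertices is adjacent iff (it was adjacent in `G`) XOR
(exactly one of the two vertices lies in `S`). -/
def seidelSwitch {V : Type*} (G : SimpleGraph V) (S : Set V) : SimpleGraph V where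
  Adj a b := a ≠ b ∧ (G.Adj a b ↔ (a ∈ S ↔ b ∈ S))
  symm := by
    constructor
    intro a b h
    obtain ⟨h1, h2⟩ := h
    refine ⟨h1.symm, ?_⟩
    rw [SimpleGraph.adj_comm]
    tauto
  loopless := by constructor; intro a h; exact h.1 rfl

/-!
Switching at a non-neighbour `x` of a vertex `y` of maximum degree adds `x` to the
neighbourhood of `y` and leaves the rest of it unchanged, so `y` gets degree `Δ(G) + 1` in
`x(G)`. As `x(G) ≅ G` has maximum degree `Δ(G)`, a vertex of maximum degree is adjacent to
every other vertex, in particular to every vertex of minimum degree.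
-/

namespace SimpleGraph

variable {V : Type*} {G : SimpleGraph V} {x y : V}

theorem seidelSwitch_singleton_adj_of_ne {a b : V} (ha : a ≠ x) (hb : b ≠ x) :
    (seidelSwitch G {x}).Adj a b ↔ G.Adj a b := by
  simp only [seidelSwitch, Set.mem_singleton_iff, ha, hb, iff_true]
  exact ⟨And.right, fun h => ⟨h.ne, h⟩⟩

theorem seidelSwitch_singleton_adj_left {b : V} :
    (seidelSwitch G {x}).Adj b x ↔ b ≠ x ∧ ¬G.Adj b x := by
  simp only [seidelSwitch, Set.mem_singleton_iff, iff_true]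
  constructor
  · rintro ⟨hbx, h⟩
    exact ⟨hbx, fun hadj => hbx (h.mp hadj)⟩
  · rintro ⟨hbx, hnadj⟩
    exact ⟨hbx, iff_of_false hnadj hbx⟩

theorem neighborFinset_seidelSwitch_singleton_of_not_adj [Fintype V] [DecidableEq V]
    [DecidableRel G.Adj] [DecidableRel (seidelSwitch G {x}).Adj] (hyx : y ≠ x)
    (hnadj : ¬G.Adj y x) :
    (seidelSwitch G {x}).neighborFinset y = insert x (G.neighborFinset y) := by
  ext v
  simp only [mem_neighborFinset, Finset.mem_insert]
  by_cases hvx : v = x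
  · subst hvx
    simp only [seidelSwitch_singleton_adj_left, true_or, iff_true]
    exact ⟨hyx, hnadj⟩
  · simp only [seidelSwitch_singleton_adj_of_ne hyx hvx, hvx, false_or]

theorem degree_seidelSwitch_singleton_of_not_adj [Fintype V] [DecidableRel G.Adj]
    [DecidableRel (seidelSwitch G {x}).Adj] (hyx : y ≠ x) (hnadj : ¬G.Adj y x) :
    (seidelSwitch G {x}).degree y = G.degree y + 1 := by
  classical
  rw [← card_neighborFinset_eq_degree, neighborFinset_seidelSwitch_singleton_of_not_adj hyx hnadj,
    Finset.card_insert_of_notMem (by simpa using hnadj), card_neighborFinset_eq_degree]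

theorem isUniversal_of_degree_eq_maxDegree [Fintype V] [DecidableRel G.Adj]
    (hIss : ∀ x : V, Nonempty (seidelSwitch G {x} ≃g G)) (hy : G.degree y = G.maxDegree) :
    G.IsUniversal y := by
  classical
  intro x hyx
  by_contra hnadj
  obtain ⟨e⟩ := hIss x
  have hdeg := degree_seidelSwitch_singleton_of_not_adj hyx hnadj
  have hmax := (seidelSwitch G {x}).degree_le_maxDegree y
  rw [e.maxDegree_eq] at hmax
  omega

end SimpleGraph

open scoped Classical in
theorem minDegree_adj_maxDegree_general {V : Type*} [Fintype V]
    (G : SimpleGraph V)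
    (hIss : ∀ x : V, Nonempty (seidelSwitch G {x} ≃g G))
    (x y : V) (hxy : x ≠ y)
    (hy : G.degree y = G.maxDegree) :
    G.Adj x y :=
  (SimpleGraph.isUniversal_of_degree_eq_maxDegree hIss hy hxy.symm).symm

open scoped Classical in
/-- If every singleton is an identity Seidel switch of `G` (of order at least 2),
then every vertex of minimum degree is adjacent to every vertex of maximum degree. -/
theorem minDegree_adj_maxDegree {V : Type*} [Fintype V] [Nonempty V]
    (G : SimpleGraph V) (hn : 2 ≤ Fintype.card V)
    (hIss : ∀ x : V, Nonempty (seidelSwitch G {x} ≃g G))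
    (x y : V) (hxy : x ≠ y)
    (hx : G.degree x = G.minDegree) (hy : G.degree y = G.maxDegree) :
    G.Adj x y :=
  minDegree_adj_maxDegree_general G hIss x y hxy hy
end

section
/- In the complete bipartite graph K_{n,n+1}, every vertex x in the part of size n+1 (i.e., every vertex of degree n) is a vertex identity Seidel switch: the graph obtained by switching at x is isomorphic to K_{n,n+1}. -/
@[simp]
theorem seidelSwitch_adj {V : Type*} (G : SimpleGraph V) (S : Set V) {u v : V} :
    (seidelSwitch G S).Adj u v ↔ u ≠ v ∧ (G.Adj u v ↔ (u ∈ S ↔ v ∈ S)) :=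
  Iff.rfl

namespace SimpleGraph

variable {α β : Type*}

def switchPartsEquiv [DecidableEq β] (b : β) : {c // c ≠ b} ⊕ Option α ≃ α ⊕ β where
  toFun
    | .inl c => .inr c
    | .inr none => .inr b
    | .inr (some a) => .inl a
  invFun
    | .inl a => .inr (some a)
    | .inr c => if h : c = b then .inr none else .inl ⟨c, h⟩
  left_inv := by
    rintro (c | _ | a)
    · simp [c.2]
    · simp
    · rfl
  right_inv := by
    rintro (a | c)
    · rfl
    · by_cases h : c = b <;> simp [h]

def completeBipartiteGraphIsoSeidelSwitchInr [DecidableEq β] (b : β) :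
    completeBipartiteGraph {c // c ≠ b} (Option α) ≃g
      seidelSwitch (completeBipartiteGraph α β) {Sum.inr b} where
  __ := switchPartsEquiv b
  map_rel_iff' := by
    rintro (⟨c, hc⟩ | _ | a) (⟨d, hd⟩ | _ | a') <;>
      simp [switchPartsEquiv] <;> grind

theorem nonempty_seidelSwitch_completeBipartiteGraph_inr_iso [Fintype α] [Fintype β]
    (hcard : Fintype.card β = Fintype.card α + 1) (b : β) :
    Nonempty (seidelSwitch (completeBipartiteGraph α β) {Sum.inr b} ≃g
      completeBipartiteGraph α β) := by
  classical
  have hne : Fintype.card {c // c ≠ b} = Fintype.card α := by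
    simp [hcard]
  have hopt : Fintype.card (Option α) = Fintype.card β := by simp [hcard]
  exact ⟨(completeBipartiteGraphIsoSeidelSwitchInr b).symm.trans <|
    completeBipartiteGraphCongr (Fintype.equivOfCardEq hne) (Fintype.equivOfCardEq hopt)⟩

end SimpleGraph

/-- In `K_{n,n+1}`, every vertex of the part of size `n+1` is a vertex
identity Seidel switch. -/
theorem completeBipartite_vertex_iss (n : ℕ) (b : Fin (n + 1)) :
    Nonempty (seidelSwitch (completeBipartiteGraph (Fin n) (Fin (n + 1))) {Sum.inr b}
      ≃g completeBipartiteGraph (Fin n) (Fin (n + 1))) :=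
  SimpleGraph.nonempty_seidelSwitch_completeBipartiteGraph_inr_iso (by simp) b
end

section
/- Every edge of the complete bipartite graph K_{m,n} is an edge identity Seidel switch: for any edge e = xy of K_{m,n}, switching with respect to {x,y} yields a graph isomorphic to K_{m,n}. -/
/-!
Colour `K_{m,n}` by the side a vertex lies on; two vertices are adjacent iff their colours differ.
Switching with respect to `S` amounts to flipping the colour of every vertex of `S`. For an
edge `{x, y}` the two endpoints carry opposite colours, so flipping both just exchanges them,
and the transposition of `x` and `y` is an isomorphism back to `K_{m,n}`.
-/

namespace SimpleGraph

variable {V : Type*}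

lemma completeBipartiteGraph_eq_comap_isLeft (α β : Type*) :
    completeBipartiteGraph α β = (⊤ : SimpleGraph Bool).comap Sum.isLeft := by
  ext u v
  rcases u with u | u <;> rcases v with v | v <;> simp

lemma seidelSwitch_comap_top_bool (c : V → Bool) (S : Set V) [DecidablePred (· ∈ S)] :
    seidelSwitch ((⊤ : SimpleGraph Bool).comap c) S =
      (⊤ : SimpleGraph Bool).comap fun v => xor (c v) (decide (v ∈ S)) := by
  ext u v
  simp only [seidelSwitch, comap_adj, top_adj]
  constructor
  · rintro ⟨-, h⟩
    by_cases hu : u ∈ S <;> by_cases hv : v ∈ S <;> simp_all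
  · intro h
    refine ⟨fun huv => h (huv ▸ rfl), ?_⟩
    by_cases hu : u ∈ S <;> by_cases hv : v ∈ S <;> simp_all

lemma seidelSwitch_comap_top_bool_pair [DecidableEq V] (c : V → Bool) {x y : V}
    (hxy : c x ≠ c y) :
    seidelSwitch ((⊤ : SimpleGraph Bool).comap c) {x, y} =
      (⊤ : SimpleGraph Bool).comap (c ∘ Equiv.swap x y) := by
  rw [seidelSwitch_comap_top_bool]
  congr 1
  funext v
  obtain rfl | hvx := eq_or_ne v x
  · simpa using (Bool.eq_not.mpr hxy.symm).symm
  obtain rfl | hvy := eq_or_ne v y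
  · simpa using (Bool.eq_not.mpr hxy).symm
  · simp [hvx, hvy, Equiv.swap_apply_of_ne_of_ne]

end SimpleGraph

open SimpleGraph

/-- Every edge of `K_{m,n}` is an edge identity Seidel switch. -/
theorem completeBipartite_edge_iss (m n : ℕ) (a : Fin m) (b : Fin n) :
    Nonempty (seidelSwitch (completeBipartiteGraph (Fin m) (Fin n))
        {Sum.inl a, Sum.inr b}
      ≃g completeBipartiteGraph (Fin m) (Fin n)) := by
  rw [completeBipartiteGraph_eq_comap_isLeft,
    seidelSwitch_comap_top_bool_pair Sum.isLeft (x := Sum.inl a) (y := Sum.inr b) (by simp),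
    ← comap_comap]
  exact ⟨Iso.comap _ _⟩
end

section
/- Let G be a finite simple graph of order n and e = xy an edge such that {x,y}(G) ≅ G (an edge-ISS). Then deg_G(x) + deg_G(y) = n. -/
namespace Finset

variable {α : Type*} [DecidableEq α]

theorem card_symmDiff_add_two_mul_card_inter (s t : Finset α) :
    #(symmDiff s t) + 2 * #(s ∩ t) = #s + #t := by
  rw [symmDiff_def, sup_eq_union, card_union_of_disjoint disjoint_sdiff_sdiff]
  have hs := card_sdiff_add_card_inter s t
  have ht := card_sdiff_add_card_inter t s
  rw [inter_comm] at ht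
  omega

end Finset

namespace SimpleGraph

open Finset

@[simp]
theorem seidelSwitch_adj {V : Type*} (G : SimpleGraph V) (S : Set V) {a b : V} :
    (seidelSwitch G S).Adj a b ↔ a ≠ b ∧ (G.Adj a b ↔ (a ∈ S ↔ b ∈ S)) :=
  Iff.rfl

variable {V : Type*} [Fintype V] [DecidableEq V] (G : SimpleGraph V) [DecidableRel G.Adj]

theorem card_interedges_eq_sum_card_neighborFinset_inter (s t : Finset V) :
    #(G.interedges s t) = ∑ v ∈ s, #(G.neighborFinset v ∩ t) := by
  rw [interedges_def, card_filter, sum_product]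
  refine sum_congr rfl fun v _ => ?_
  rw [← card_filter, neighborFinset_eq_filter, filter_inter, univ_inter]

theorem neighborFinset_seidelSwitch (S : Finset V) [DecidableRel (seidelSwitch G S).Adj] (v : V) :
    (seidelSwitch G S).neighborFinset v =
      symmDiff (G.neighborFinset v) (if v ∈ S then Sᶜ else S) := by
  ext b
  rw [mem_neighborFinset, seidelSwitch_adj, mem_symmDiff, mem_neighborFinset]
  by_cases hvb : v = b
  · subst hvb
    split_ifs with hv <;> simp [hv]
  · split_ifs with hv <;> by_cases hb : b ∈ S <;> simp [hvb, hv, hb]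

theorem degree_seidelSwitch_add (S : Finset V) [DecidableRel (seidelSwitch G S).Adj] (v : V) :
    (seidelSwitch G S).degree v + 2 * #(G.neighborFinset v ∩ if v ∈ S then Sᶜ else S) =
      G.degree v + #(if v ∈ S then Sᶜ else S) := by
  rw [← card_neighborFinset_eq_degree, ← card_neighborFinset_eq_degree,
    neighborFinset_seidelSwitch, card_symmDiff_add_two_mul_card_inter]

theorem card_edgeFinset_seidelSwitch_add (S : Finset V) [DecidableRel (seidelSwitch G S).Adj] :
    #(seidelSwitch G S).edgeFinset + 2 * #(G.interedges S Sᶜ) =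
      #G.edgeFinset + #S * #Sᶜ := by
  have hin := sum_congr rfl fun v (hv : v ∈ S) => by
    simpa [hv] using G.degree_seidelSwitch_add S v
  have hout := sum_congr rfl fun v (hv : v ∈ Sᶜ) => by
    simpa [mem_compl.1 hv] using G.degree_seidelSwitch_add S v
  have hcut : #(G.interedges S Sᶜ) = #(G.interedges Sᶜ S) :=
    @Rel.card_interedges_comm _ _ _ G.symm _ _
  simp only [sum_add_distrib, ← mul_sum, sum_const, smul_eq_mul] at hin hout
  have hdeg := sum_add_sum_compl S fun v => (seidelSwitch G S).degree v
  have hdeg' := sum_add_sum_compl S fun v => G.degree v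
  rw [sum_degrees_eq_twice_card_edges] at hdeg hdeg'
  simp only [card_interedges_eq_sum_card_neighborFinset_inter] at hcut ⊢
  linarith

theorem card_neighborFinset_inter_compl_pair_add_one {v w : V} (h : G.Adj v w) :
    #(G.neighborFinset v ∩ {v, w}ᶜ) + 1 = G.degree v := by
  have herase : G.neighborFinset v ∩ {v, w}ᶜ = (G.neighborFinset v).erase w := by
    ext b
    simp only [mem_inter, mem_compl, mem_insert, mem_singleton, mem_erase, mem_neighborFinset]
    have hbv := fun hb : G.Adj v b => hb.ne'
    tauto
  rw [herase, card_erase_add_one ((G.mem_neighborFinset v w).2 h), card_neighborFinset_eq_degree]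

theorem card_interedges_pair_compl_add_two {x y : V} (hxy : G.Adj x y) :
    #(G.interedges {x, y} {x, y}ᶜ) + 2 = G.degree x + G.degree y := by
  have hx := G.card_neighborFinset_inter_compl_pair_add_one hxy
  have hy := G.card_neighborFinset_inter_compl_pair_add_one hxy.symm
  rw [pair_comm] at hy
  rw [card_interedges_eq_sum_card_neighborFinset_inter, sum_pair hxy.ne]
  omega

end SimpleGraph

open scoped Classical in
/-- If `e = xy` is an edge identity Seidel switch of a graph of order `n`,
then `deg(x) + deg(y) = n`. -/
theorem edge_iss_degree_sum {V : Type*} [Fintype V] (G : SimpleGraph V) (x y : V)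
    (hxy : G.Adj x y) (h : Nonempty (seidelSwitch G {x, y} ≃g G)) :
    G.degree x + G.degree y = Fintype.card V := by
  obtain ⟨f⟩ := h
  have hedges := G.card_edgeFinset_seidelSwitch_add {x, y}
  rw [Finset.coe_pair, f.card_edgeFinset_eq, Finset.card_compl, Finset.card_pair hxy.ne] at hedges
  have hcut := G.card_interedges_pair_compl_add_two hxy
  have htwo : 2 ≤ Fintype.card V := by
    simpa [Finset.card_pair hxy.ne] using Finset.card_le_univ ({x, y} : Finset V)
  omega
end

section
/- Let G be a finite simple graph of order n and e = xy an edge of G with H the induced subgraph on V(G)\{x,y}. Suppose there exists an isomorphism ψ from G to {x,y}(G) with ψ(x) = y, ψ(y) = x, and ψ(V(H)) = V(H). Then the restriction φ = ψ|_{V(H)} is an automorphism of H satisfying φ(N_G(x)\{y}) = V(H)\N_G(y). (Necessity direction of the edge-ISS characterization under the assumption that the isomorphism swaps x and y and preserves V(H).) -/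
/-!
Since `ψ` permutes `{x, y}`, it preserves `V(H) = V \ {x, y}`, and the switch leaves the graph
induced on `V(H)` untouched, so the restriction of `ψ` is an automorphism of `H`. For `v ∈ V(H)`
the pair `x, v` is switched, so `x ~ v` in `G` iff `ψ x = y` and `ψ v` are adjacent in the
switch, i.e. iff `y ≁ ψ v` in `G`.
-/

namespace SimpleGraph

variable {V : Type*}

def Iso.ofEq {G H : SimpleGraph V} (h : G = H) : G ≃g H :=
  RelIso.cast rfl (h ▸ HEq.rfl)

end SimpleGraph

open SimpleGraph

section SeidelSwitch

variable {V : Type*} (G : SimpleGraph V) (S : Set V)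

lemma seidelSwitch_induce_compl : (seidelSwitch G S).induce Sᶜ = G.induce Sᶜ := by
  ext ⟨a, ha⟩ ⟨b, hb⟩
  simp only [comap_adj, Function.Embedding.coe_subtype, seidelSwitch, iff_of_false ha hb,
    iff_true, and_iff_right_iff_imp]
  exact Adj.ne

lemma seidelSwitch_adj_of_mem_of_notMem {a b : V} (ha : a ∈ S) (hb : b ∉ S) :
    (seidelSwitch G S).Adj a b ↔ ¬ G.Adj a b := by
  have hab : a ≠ b := fun h => hb (h ▸ ha)
  simp only [seidelSwitch, hab, iff_true_intro ha, iff_false_intro hb, ne_eq, not_false_eq_true,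
    true_and, not_true_eq_false, iff_false]

end SeidelSwitch

theorem edge_iss_aut_of_iso_general {V : Type*}
    (G : SimpleGraph V) (x y : V)
    (ψ : G ≃g seidelSwitch G {x, y})
    (hx : ψ x = y) (hy : ψ y = x) :
    ∃ φ : G.induce ({x, y}ᶜ : Set V) ≃g G.induce ({x, y}ᶜ : Set V),
      (∀ v : ({x, y}ᶜ : Set V), (φ v : V) = ψ ↑v) ∧
      φ '' {v : ({x, y}ᶜ : Set V) | G.Adj x ↑v}
        = {v : ({x, y}ᶜ : Set V) | ¬ G.Adj y ↑v} := by
  have hpair : Set.BijOn ψ {x, y} {x, y} := by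
    simpa [Set.image_pair, hx, hy, Set.pair_comm] using ψ.injective.injOn.bijOn_image (s := {x, y})
  let φ := (Iso.ofEq (seidelSwitch_induce_compl G _)).comp (ψ.induce (hpair.compl ψ.bijective))
  have hcross : ∀ v : ({x, y}ᶜ : Set V), G.Adj x v ↔ ¬ G.Adj y (φ v) := fun v => by
    rw [← ψ.map_adj_iff, hx]
    exact seidelSwitch_adj_of_mem_of_notMem G {x, y} (by simp) (φ v).2
  refine ⟨φ, fun _ => rfl, ?_⟩
  calc φ '' {v | G.Adj x v} = φ '' (φ ⁻¹' {v | ¬ G.Adj y v}) := by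
        congr 1; ext v; exact hcross v
    _ = {v : ({x, y}ᶜ : Set V) | ¬ G.Adj y v} := Set.image_preimage_eq _ φ.surjective

/-- Necessity direction of the edge-ISS characterization: if an isomorphism
`ψ : G ≃ {x,y}(G)` swaps `x` and `y` and preserves `V(H) = V \ {x,y}`, then its
restriction to `V(H)` is an automorphism `φ` of the induced subgraph `H`
mapping `N(x) \ {y}` onto `V(H) \ N(y)`. -/
theorem edge_iss_aut_of_iso {V : Type*} [Fintype V] [DecidableEq V]
    (G : SimpleGraph V) (x y : V) (hxy : G.Adj x y)
    (ψ : G ≃g seidelSwitch G {x, y})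
    (hx : ψ x = y) (hy : ψ y = x)
    (hH : ∀ v : V, v ∉ ({x, y} : Set V) → ψ v ∉ ({x, y} : Set V)) :
    ∃ φ : G.induce ({x, y}ᶜ : Set V) ≃g G.induce ({x, y}ᶜ : Set V),
      (∀ v : ({x, y}ᶜ : Set V), (φ v : V) = ψ ↑v) ∧
      φ '' {v : ({x, y}ᶜ : Set V) | G.Adj x ↑v}
        = {v : ({x, y}ᶜ : Set V) | ¬ G.Adj y ↑v} :=
  edge_iss_aut_of_iso_general G x y ψ hx hy
end
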